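/- Assume 0 < θ < 1/3 and let C⋆ ≤ (1−3θ)/2. For every unit vector q ∈ ℝ^p with 0 < ‖Aᵀq‖_∞² < C⋆ there exists v ∈ ℝ^p with vᵀ Hess f(q) v < 0. In particular, if θ ≤ 1/6 and 0 < ‖Aᵀq‖_∞² < C⋆ ≤ 1/(3√2), then there exists a unit vector v with vᵀ Hess f(q) v < −((11−5√2)/9)·‖Aᵀq‖_∞². -/

import Mathlib

open Matrix MeasureTheory ProbabilityTheory Real
open scoped BigOperators ENNReal

noncomputable section

/-- squared Euclidean norm -/
def l2sq {m : ℕ} (v : Fin m → ℝ) : ℝ := ∑ i, v i ^ 2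

/-- fourth power of the ℓ₄ norm -/
def l4p4 {m : ℕ} (v : Fin m → ℝ) : ℝ := ∑ i, v i ^ 4

/-- Euclidean norm -/
def l2norm {m : ℕ} (v : Fin m → ℝ) : ℝ := Real.sqrt (l2sq v)

/-- squared sup-norm -/
def linfSq {m : ℕ} (v : Fin m → ℝ) : ℝ := ⨆ i, (v i) ^ 2

/-- projection onto the orthogonal complement of q -/
def proj {p : ℕ} (q : Fin p → ℝ) : Matrix (Fin p) (Fin p) ℝ := 1 - Matrix.vecMulVec q q

def zeta {p r : ℕ} (A : Matrix (Fin p) (Fin r) ℝ) (q : Fin p → ℝ) : Fin r → ℝ := Aᵀ *ᵥ q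

/-- population objective -/
def fpop {p r : ℕ} (θ : ℝ) (A : Matrix (Fin p) (Fin r) ℝ) (q : Fin p → ℝ) : ℝ :=
  -(1/4) * ((1 - θ) * l4p4 (zeta A q) + θ * (l2sq (zeta A q)) ^ 2)

/-- Riemannian gradient of the population objective -/
def gradf {p r : ℕ} (θ : ℝ) (A : Matrix (Fin p) (Fin r) ℝ) (q : Fin p → ℝ) : Fin p → ℝ :=
  -((proj q) *ᵥ ((1 - θ) • (A *ᵥ fun j => (zeta A q j) ^ 3)
      + (θ * l2sq (zeta A q)) • (A *ᵥ zeta A q)))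

/-- Riemannian Hessian of the population objective -/
def hessf {p r : ℕ} (θ : ℝ) (A : Matrix (Fin p) (Fin r) ℝ) (q : Fin p → ℝ) :
    Matrix (Fin p) (Fin p) ℝ :=
  -((1 - θ) • (proj q *
      ((3 : ℝ) • (A * Matrix.diagonal (fun j => (zeta A q j) ^ 2) * Aᵀ)
        - l4p4 (zeta A q) • (1 : Matrix (Fin p) (Fin p) ℝ)) * proj q))
  - θ • (proj q *
      (l2sq (zeta A q) • (A * Aᵀ)
        + (2 : ℝ) • (A * Aᵀ * Matrix.vecMulVec q q * (A * Aᵀ))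
        - (l2sq (zeta A q)) ^ 2 • (1 : Matrix (Fin p) (Fin p) ℝ)) * proj q)

/-- quadratic form -/
def qform {p : ℕ} (M : Matrix (Fin p) (Fin p) ℝ) (v : Fin p → ℝ) : ℝ := v ⬝ᵥ (M *ᵥ v)

/-- α(q) -/
def alphaf {p r : ℕ} (θ : ℝ) (A : Matrix (Fin p) (Fin r) ℝ) (q : Fin p → ℝ) : ℝ :=
  l4p4 (zeta A q) + (θ / (1 - θ)) * ((l2sq (zeta A q)) ^ 2 - l2sq (zeta A q))

/-- columns of X -/
def colX {r n : ℕ} (X : Matrix (Fin r) (Fin n) ℝ) (k : Fin n) : Fin r → ℝ := fun i => X i k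

/-- finite-sample objective -/
def Ffun {p r n : ℕ} (θ σ : ℝ) (A : Matrix (Fin p) (Fin r) ℝ) (X : Matrix (Fin r) (Fin n) ℝ)
    (q : Fin p → ℝ) : ℝ :=
  -(1 / (12 * θ * σ ^ 4 * n)) * ∑ k : Fin n, (q ⬝ᵥ (A *ᵥ colX X k)) ^ 4

/-- Riemannian gradient of the finite-sample objective -/
def gradF {p r n : ℕ} (θ σ : ℝ) (A : Matrix (Fin p) (Fin r) ℝ) (X : Matrix (Fin r) (Fin n) ℝ)
    (q : Fin p → ℝ) : Fin p → ℝ :=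
  (-(1 / (3 * θ * σ ^ 4 * n))) •
    ((proj q) *ᵥ ∑ k : Fin n, ((q ⬝ᵥ (A *ᵥ colX X k)) ^ 3) • (A *ᵥ colX X k))

/-- Riemannian Hessian of the finite-sample objective -/
def hessF {p r n : ℕ} (θ σ : ℝ) (A : Matrix (Fin p) (Fin r) ℝ) (X : Matrix (Fin r) (Fin n) ℝ)
    (q : Fin p → ℝ) : Matrix (Fin p) (Fin p) ℝ :=
  (-(1 / (3 * θ * σ ^ 4 * n))) •
    ∑ k : Fin n, proj q *
      ((3 * (q ⬝ᵥ (A *ᵥ colX X k)) ^ 2) • Matrix.vecMulVec (A *ᵥ colX X k) (A *ᵥ colX X k)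
        - ((q ⬝ᵥ (A *ᵥ colX X k)) ^ 4) • (1 : Matrix (Fin p) (Fin p) ℝ)) * proj q

/-- spectral norm of a rectangular matrix -/
def opNorm {m n : ℕ} (M : Matrix (Fin m) (Fin n) ℝ) : ℝ :=
  ‖LinearMap.toContinuousLinearMap (Matrix.toEuclideanLin M)‖

/-- Bernoulli(θ) law on ℝ -/
def bernoulliReal (θ : ℝ) : Measure ℝ :=
  ENNReal.ofReal θ • Measure.dirac (1 : ℝ) + ENNReal.ofReal (1 - θ) • Measure.dirac (0 : ℝ)

/-- Bernoulli–Gaussian law BG(θ, σ²) on ℝ -/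
def bgLaw (θ σ2 : ℝ) : Measure ℝ :=
  ((bernoulliReal θ).prod (gaussianReal 0 σ2.toNNReal)).map fun p => p.1 * p.2

/-- law of a random vector in ℝ^r with i.i.d. BG(θ, σ²) entries -/
def bgVec (r : ℕ) (θ σ2 : ℝ) : Measure (Fin r → ℝ) :=
  Measure.pi fun _ : Fin r => bgLaw θ σ2

/-- law of a random r×n matrix with i.i.d. BG(θ, σ²) entries -/
def bgMatrix (r n : ℕ) (θ σ2 : ℝ) : Measure (Fin r → Fin n → ℝ) :=
  Measure.pi fun _ : Fin r => Measure.pi fun _ : Fin n => bgLaw θ σ2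

/-! Let `ζ = Aᵀq`, pick `i` with `ζ_i² = ‖ζ‖_∞² =: c`, and move along `w = P a_i`, the `i`-th
column projected onto `q^⊥`. Orthonormality of the columns gives `Aᵀw = e_i - ζ_i ζ` and
`‖w‖² = 1 - c`, so `wᵀ Hess f(q) w` is an explicit polynomial in `c`, `t = ‖ζ‖₂² ≤ 1` and
`b = ‖ζ‖₄⁴ ∈ [c², c]`. Its `θ`-term is `-θ (1 - t)(t + 2c - 4ct) ≤ 0`, and its `(1 - θ)`-term is
at most `-(1 - θ) · 2c(1 - c)(1 - 2c)`, which is negative because `c < C⋆ ≤ (1 - 3θ)/2 < 1/2`.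
After normalising `w` the curvature is at most `-2(1 - θ) c (1 - 2c)`, and for `θ ≤ 1/6`,
`c < 1/(3√2)` the factor `2(1 - θ)(1 - 2c)` exceeds `(11 - 5√2)/9`. -/

section Vectors

variable {m : ℕ}

lemma l2sq_eq_dotProduct (v : Fin m → ℝ) : l2sq v = v ⬝ᵥ v := by
  simp only [l2sq, dotProduct, sq]

lemma l2sq_smul (s : ℝ) (v : Fin m → ℝ) : l2sq (s • v) = s ^ 2 * l2sq v := by
  simp only [l2sq, Pi.smul_apply, smul_eq_mul, mul_pow, Finset.mul_sum]

lemma qform_smul (M : Matrix (Fin m) (Fin m) ℝ) (s : ℝ) (v : Fin m → ℝ) :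
    qform M (s • v) = s ^ 2 * qform M v := by
  simp only [qform, mulVec_smul, smul_dotProduct, dotProduct_smul, smul_eq_mul]
  ring

lemma exists_linfSq_eq_sq [Nonempty (Fin m)] (v : Fin m → ℝ) :
    ∃ i, linfSq v = v i ^ 2 ∧ ∀ j, v j ^ 2 ≤ v i ^ 2 := by
  obtain ⟨i, hi⟩ := Finite.exists_max fun j => v j ^ 2
  exact ⟨i, le_antisymm (ciSup_le hi) (le_ciSup (Finite.bddAbove_range fun j => v j ^ 2) i), hi⟩

lemma l2sq_nonneg (v : Fin m → ℝ) : 0 ≤ l2sq v :=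
  Finset.sum_nonneg fun j _ => sq_nonneg (v j)

lemma sq_sq_le_l4p4 (v : Fin m → ℝ) (i : Fin m) : (v i ^ 2) ^ 2 ≤ l4p4 v := by
  rw [← pow_mul]
  exact Finset.single_le_sum (f := fun j => v j ^ 4) (fun j _ => by positivity) (Finset.mem_univ i)

lemma l4p4_le_mul_l2sq {v : Fin m → ℝ} {c : ℝ} (hc : ∀ j, v j ^ 2 ≤ c) :
    l4p4 v ≤ c * l2sq v := by
  rw [l4p4, l2sq, Finset.mul_sum]
  refine Finset.sum_le_sum fun j _ => ?_
  nlinarith [hc j, sq_nonneg (v j)]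

end Vectors

section QuadraticForm

variable {p r : ℕ}

lemma qform_add (M N : Matrix (Fin p) (Fin p) ℝ) (v : Fin p → ℝ) :
    qform (M + N) v = qform M v + qform N v := by
  simp only [qform, add_mulVec, dotProduct_add]

lemma qform_sub (M N : Matrix (Fin p) (Fin p) ℝ) (v : Fin p → ℝ) :
    qform (M - N) v = qform M v - qform N v := by
  simp only [qform, sub_mulVec, dotProduct_sub]

lemma qform_neg (M : Matrix (Fin p) (Fin p) ℝ) (v : Fin p → ℝ) :
    qform (-M) v = -qform M v := by
  simp only [qform, neg_mulVec, dotProduct_neg]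

lemma qform_smul_left (s : ℝ) (M : Matrix (Fin p) (Fin p) ℝ) (v : Fin p → ℝ) :
    qform (s • M) v = s * qform M v := by
  simp only [qform, smul_mulVec, dotProduct_smul, smul_eq_mul]

lemma qform_one (v : Fin p → ℝ) : qform 1 v = l2sq v := by
  rw [qform, one_mulVec, l2sq_eq_dotProduct]

lemma dotProduct_mulVec_eq_transpose (x : Fin p → ℝ) (A : Matrix (Fin p) (Fin r) ℝ)
    (z : Fin r → ℝ) : x ⬝ᵥ (A *ᵥ z) = (Aᵀ *ᵥ x) ⬝ᵥ z := by
  rw [dotProduct_mulVec, mulVec_transpose]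

lemma dotProduct_mul_transpose_mulVec (A : Matrix (Fin p) (Fin r) ℝ) (x y : Fin p → ℝ) :
    x ⬝ᵥ ((A * Aᵀ) *ᵥ y) = (Aᵀ *ᵥ x) ⬝ᵥ (Aᵀ *ᵥ y) := by
  rw [← mulVec_mulVec, dotProduct_mulVec_eq_transpose]

lemma qform_mul_diagonal_mul_transpose (A : Matrix (Fin p) (Fin r) ℝ) (d : Fin r → ℝ)
    (v : Fin p → ℝ) : qform (A * diagonal d * Aᵀ) v = ∑ j, d j * (Aᵀ *ᵥ v) j ^ 2 := by
  rw [qform, ← mulVec_mulVec, ← mulVec_mulVec, dotProduct_mulVec_eq_transpose]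
  simp only [dotProduct, mulVec_diagonal]
  exact Finset.sum_congr rfl fun j _ => by ring

lemma qform_mul_transpose_self (A : Matrix (Fin p) (Fin r) ℝ) (v : Fin p → ℝ) :
    qform (A * Aᵀ) v = l2sq (Aᵀ *ᵥ v) := by
  rw [qform, dotProduct_mul_transpose_mulVec, l2sq_eq_dotProduct]

lemma qform_mul_vecMulVec_mul (A : Matrix (Fin p) (Fin r) ℝ) (q v : Fin p → ℝ) :
    qform (A * Aᵀ * vecMulVec q q * (A * Aᵀ)) v = ((Aᵀ *ᵥ q) ⬝ᵥ (Aᵀ *ᵥ v)) ^ 2 := by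
  rw [qform, ← mulVec_mulVec, ← mulVec_mulVec, vecMulVec_mulVec, op_smul_eq_smul, mulVec_smul,
    dotProduct_smul, dotProduct_mul_transpose_mulVec, dotProduct_mul_transpose_mulVec,
    dotProduct_comm (Aᵀ *ᵥ v), smul_eq_mul, sq]

lemma proj_mulVec (q y : Fin p → ℝ) : proj q *ᵥ y = y - (q ⬝ᵥ y) • q := by
  rw [proj, sub_mulVec, one_mulVec, vecMulVec_mulVec, op_smul_eq_smul]

lemma qform_proj_mul_mul_proj {q w : Fin p → ℝ} (hw : q ⬝ᵥ w = 0)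
    (X : Matrix (Fin p) (Fin p) ℝ) : qform (proj q * X * proj q) w = qform X w := by
  have hPw : proj q *ᵥ w = w := by rw [proj_mulVec, hw, zero_smul, sub_zero]
  rw [qform, qform, ← mulVec_mulVec, ← mulVec_mulVec, hPw, proj_mulVec, dotProduct_sub,
    dotProduct_smul, dotProduct_comm w q, hw, smul_zero, sub_zero]

lemma qform_hessf_of_dotProduct_eq_zero (θ : ℝ) (A : Matrix (Fin p) (Fin r) ℝ)
    {q w : Fin p → ℝ} (hw : q ⬝ᵥ w = 0) :
    qform (hessf θ A q) w =
      -((1 - θ) * (3 * ∑ j, zeta A q j ^ 2 * (Aᵀ *ᵥ w) j ^ 2 - l4p4 (zeta A q) * l2sq w))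
      - θ * (l2sq (zeta A q) * l2sq (Aᵀ *ᵥ w) + 2 * (zeta A q ⬝ᵥ (Aᵀ *ᵥ w)) ^ 2
        - l2sq (zeta A q) ^ 2 * l2sq w) := by
  simp only [hessf, qform_sub, qform_neg, qform_add, qform_smul_left,
    qform_proj_mul_mul_proj hw, qform_one, qform_mul_diagonal_mul_transpose,
    qform_mul_transpose_self, qform_mul_vecMulVec_mul, zeta]

end QuadraticForm

section SingleSub

variable {r : ℕ} (ζ : Fin r → ℝ) (i : Fin r)

lemma dotProduct_single_sub_smul :
    ζ ⬝ᵥ (Pi.single i 1 - ζ i • ζ) = ζ i * (1 - l2sq ζ) := by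
  rw [dotProduct_sub, dotProduct_single, dotProduct_smul, ← l2sq_eq_dotProduct, smul_eq_mul]
  ring

lemma l2sq_single_sub_smul :
    l2sq (Pi.single i 1 - ζ i • ζ) = 1 - 2 * ζ i ^ 2 + ζ i ^ 2 * l2sq ζ := by
  rw [l2sq_eq_dotProduct, sub_dotProduct, smul_dotProduct, dotProduct_single_sub_smul,
    single_dotProduct, Pi.sub_apply, Pi.single_eq_same, Pi.smul_apply, smul_eq_mul, smul_eq_mul]
  ring

lemma sum_sq_mul_sq_single_sub_smul :
    ∑ j, ζ j ^ 2 * (Pi.single i 1 - ζ i • ζ : Fin r → ℝ) j ^ 2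
      = ζ i ^ 2 - 2 * ζ i ^ 4 + ζ i ^ 2 * l4p4 ζ := by
  have h : ∀ j, ζ j ^ 2 * (Pi.single i 1 - ζ i • ζ : Fin r → ℝ) j ^ 2
      = (Pi.single i (ζ i ^ 2 - 2 * ζ i ^ 4) : Fin r → ℝ) j + ζ i ^ 2 * ζ j ^ 4 := by
    intro j
    rcases eq_or_ne j i with rfl | hj
    · simp only [Pi.sub_apply, Pi.single_eq_same, Pi.smul_apply, smul_eq_mul]
      ring
    · simp only [Pi.sub_apply, Pi.single_eq_of_ne hj, Pi.smul_apply, smul_eq_mul]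
      ring
  rw [Finset.sum_congr rfl fun j _ => h j, Finset.sum_add_distrib, Finset.sum_pi_single',
    if_pos (Finset.mem_univ i), ← Finset.mul_sum, l4p4]

end SingleSub

section Isometry

variable {p r : ℕ} {A : Matrix (Fin p) (Fin r) ℝ} {q : Fin p → ℝ}

lemma transpose_mulVec_mulVec_of_isometry (hA : Aᵀ * A = 1) (x : Fin r → ℝ) :
    Aᵀ *ᵥ (A *ᵥ x) = x := by
  rw [mulVec_mulVec, hA, one_mulVec]

lemma l2sq_zeta_le_one (hA : Aᵀ * A = 1) (hq : l2sq q = 1) : l2sq (zeta A q) ≤ 1 := by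
  set ζ := zeta A q
  have hqAζ : q ⬝ᵥ (A *ᵥ ζ) = l2sq ζ := by
    rw [dotProduct_mulVec_eq_transpose, l2sq_eq_dotProduct]
    rfl
  have hAζ : (A *ᵥ ζ) ⬝ᵥ (A *ᵥ ζ) = l2sq ζ := by
    rw [dotProduct_mulVec_eq_transpose, transpose_mulVec_mulVec_of_isometry hA,
      l2sq_eq_dotProduct]
  have h := l2sq_nonneg (q - A *ᵥ ζ)
  rw [l2sq_eq_dotProduct, sub_dotProduct, dotProduct_sub, dotProduct_sub,
    dotProduct_comm (A *ᵥ ζ) q, hqAζ, hAζ, ← l2sq_eq_dotProduct, hq] at h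
  linarith

def projCol (A : Matrix (Fin p) (Fin r) ℝ) (q : Fin p → ℝ) (i : Fin r) : Fin p → ℝ :=
  A *ᵥ Pi.single i 1 - zeta A q i • q

lemma dotProduct_projCol (hq : l2sq q = 1) (i : Fin r) : q ⬝ᵥ projCol A q i = 0 := by
  rw [projCol, dotProduct_sub, dotProduct_mulVec_eq_transpose, dotProduct_smul,
    ← l2sq_eq_dotProduct, hq, dotProduct_single, smul_eq_mul]
  simp only [zeta, mul_one, sub_self]

lemma transpose_mulVec_projCol (hA : Aᵀ * A = 1) (i : Fin r) :
    Aᵀ *ᵥ projCol A q i = Pi.single i 1 - zeta A q i • zeta A q := by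
  rw [projCol, mulVec_sub, transpose_mulVec_mulVec_of_isometry hA, mulVec_smul]
  rfl

lemma l2sq_projCol (hA : Aᵀ * A = 1) (hq : l2sq q = 1) (i : Fin r) :
    l2sq (projCol A q i) = 1 - zeta A q i ^ 2 := by
  have hwq : projCol A q i ⬝ᵥ q = 0 := by rw [dotProduct_comm, dotProduct_projCol hq]
  calc l2sq (projCol A q i)
      = projCol A q i ⬝ᵥ (A *ᵥ Pi.single i 1) - zeta A q i * (projCol A q i ⬝ᵥ q) := by
        rw [l2sq_eq_dotProduct, ← smul_eq_mul, ← dotProduct_smul, ← dotProduct_sub]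
        rfl
    _ = 1 - zeta A q i ^ 2 := by
        rw [hwq, dotProduct_mulVec_eq_transpose, transpose_mulVec_projCol hA, sub_dotProduct,
          single_dotProduct, smul_dotProduct, dotProduct_single, smul_eq_mul, Pi.single_eq_same]
        ring

end Isometry

section Curvature

variable {p r : ℕ} {A : Matrix (Fin p) (Fin r) ℝ} {q : Fin p → ℝ}

lemma qform_hessf_projCol_le (hA : Aᵀ * A = 1) (hq : l2sq q = 1) {θ : ℝ} (hθ0 : 0 ≤ θ)
    (hθ1 : θ ≤ 1) {i : Fin r} (hi : ∀ j, zeta A q j ^ 2 ≤ zeta A q i ^ 2)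
    (hc : zeta A q i ^ 2 ≤ 1 / 2) :
    qform (hessf θ A q) (projCol A q i)
      ≤ -((1 - θ) * (2 * zeta A q i ^ 2 * (1 - zeta A q i ^ 2) * (1 - 2 * zeta A q i ^ 2))) := by
  rw [qform_hessf_of_dotProduct_eq_zero θ A (dotProduct_projCol hq i),
    transpose_mulVec_projCol hA, l2sq_projCol hA hq, sum_sq_mul_sq_single_sub_smul,
    l2sq_single_sub_smul, dotProduct_single_sub_smul]
  have ht := l2sq_zeta_le_one hA hq
  have hbt := l4p4_le_mul_l2sq hi
  have hb := sq_sq_le_l4p4 (zeta A q) i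
  set a := zeta A q i
  set t := l2sq (zeta A q)
  set b := l4p4 (zeta A q)
  have ht0 : 0 ≤ t := l2sq_nonneg _
  have hc0 : 0 ≤ a ^ 2 := sq_nonneg a
  have hbc : b ≤ a ^ 2 := hbt.trans (mul_le_of_le_one_right hc0 ht)
  have hl4 : 2 * a ^ 2 * (1 - a ^ 2) * (1 - 2 * a ^ 2)
      ≤ 3 * (a ^ 2 - 2 * a ^ 4 + a ^ 2 * b) - b * (1 - a ^ 2) := by
    nlinarith [mul_nonneg hc0 hc0]
  have hl2 :
      0 ≤ t * (1 - 2 * a ^ 2 + a ^ 2 * t) + 2 * (a * (1 - t)) ^ 2 - t ^ 2 * (1 - a ^ 2) := by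
    nlinarith [mul_nonneg ht0 (sub_nonneg.2 ht)]
  nlinarith [mul_le_mul_of_nonneg_left hl4 (sub_nonneg.2 hθ1), mul_nonneg hθ0 hl2]

lemma exists_unit_qform_hessf_le [Nonempty (Fin r)] (hA : Aᵀ * A = 1) (hq : l2sq q = 1)
    {θ : ℝ} (hθ0 : 0 ≤ θ) (hθ1 : θ ≤ 1) (hc : linfSq (zeta A q) < 1 / 2) :
    ∃ v, l2sq v = 1 ∧ qform (hessf θ A q) v
      ≤ -(2 * (1 - θ) * linfSq (zeta A q) * (1 - 2 * linfSq (zeta A q))) := by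
  obtain ⟨i, hci, hi⟩ := exists_linfSq_eq_sq (zeta A q)
  rw [hci] at hc ⊢
  have hw := qform_hessf_projCol_le hA hq hθ0 hθ1 hi hc.le
  have hs : 0 < 1 - zeta A q i ^ 2 := by linarith
  set s := (√(1 - zeta A q i ^ 2))⁻¹
  have hs2 : s ^ 2 * (1 - zeta A q i ^ 2) = 1 := by
    rw [inv_pow, sq_sqrt hs.le, inv_mul_cancel₀ hs.ne']
  refine ⟨s • projCol A q i, by rw [l2sq_smul, l2sq_projCol hA hq, hs2], ?_⟩
  rw [qform_smul]
  calc s ^ 2 * qform (hessf θ A q) (projCol A q i)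
      ≤ s ^ 2 * -((1 - θ) * (2 * zeta A q i ^ 2 * (1 - zeta A q i ^ 2)
          * (1 - 2 * zeta A q i ^ 2))) := mul_le_mul_of_nonneg_left hw (sq_nonneg s)
    _ = -(2 * (1 - θ) * zeta A q i ^ 2 * (1 - 2 * zeta A q i ^ 2)) := by
      linear_combination (-(2 * (1 - θ) * zeta A q i ^ 2 * (1 - 2 * zeta A q i ^ 2))) * hs2

end Curvature

lemma eleven_sub_five_sqrt_two_div_nine_lt {θ c : ℝ} (hθ : θ ≤ 1 / 6)
    (hc : c < 1 / (3 * √2)) : (11 - 5 * √2) / 9 < 2 * (1 - θ) * (1 - 2 * c) := by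
  have h2 : √2 ^ 2 = 2 := sq_sqrt zero_le_two
  have h2pos : 0 < √2 := by positivity
  have h2lt : √2 < 3 / 2 := by nlinarith
  have hc' : 6 * c < √2 := by
    rw [lt_div_iff₀ (by positivity)] at hc
    nlinarith
  nlinarith [mul_le_mul_of_nonneg_right (show (5 : ℝ) / 6 ≤ 1 - θ by linarith)
    (show 0 ≤ 1 - 2 * c by nlinarith)]

theorem stmt4_general (p r : ℕ) (hr : 1 ≤ r)
    (A : Matrix (Fin p) (Fin r) ℝ) (hA : Aᵀ * A = 1)
    (θ Cstar : ℝ) (hθ0 : 0 < θ) (hC : Cstar ≤ (1 - 3*θ)/2)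
    (q : Fin p → ℝ) (hq : l2sq q = 1)
    (h0 : 0 < linfSq (zeta A q)) (h1 : linfSq (zeta A q) < Cstar) :
    (∃ v : Fin p → ℝ, qform (hessf θ A q) v < 0) ∧
    (θ ≤ 1/6 → Cstar ≤ 1/(3*Real.sqrt 2) →
      ∃ v : Fin p → ℝ, l2sq v = 1 ∧
        qform (hessf θ A q) v < -((11 - 5*Real.sqrt 2)/9) * linfSq (zeta A q)) := by
  have : Nonempty (Fin r) := ⟨⟨0, hr⟩⟩
  have hc : linfSq (zeta A q) < 1 / 2 := by linarith
  obtain ⟨v, hv, hQ⟩ := exists_unit_qform_hessf_le hA hq hθ0.le (by linarith) hc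
  refine ⟨⟨v, hQ.trans_lt ?_⟩, fun hθ6 hC2 => ⟨v, hv, hQ.trans_lt ?_⟩⟩
  · have : 0 < 2 * (1 - θ) * linfSq (zeta A q) * (1 - 2 * linfSq (zeta A q)) :=
      mul_pos (mul_pos (by linarith) h0) (by linarith)
    linarith
  · nlinarith [eleven_sub_five_sqrt_two_div_nine_lt hθ6 (h1.trans_le hC2)]

theorem stmt4 (p r : ℕ) (hr : 1 ≤ r) (hrp : r ≤ p)
    (A : Matrix (Fin p) (Fin r) ℝ) (hA : Aᵀ * A = 1)
    (θ Cstar : ℝ) (hθ0 : 0 < θ) (hθ : θ < 1/3) (hC : Cstar ≤ (1 - 3*θ)/2)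
    (q : Fin p → ℝ) (hq : l2sq q = 1)
    (h0 : 0 < linfSq (zeta A q)) (h1 : linfSq (zeta A q) < Cstar) :
    (∃ v : Fin p → ℝ, qform (hessf θ A q) v < 0) ∧
    (θ ≤ 1/6 → Cstar ≤ 1/(3*Real.sqrt 2) →
      ∃ v : Fin p → ℝ, l2sq v = 1 ∧
        qform (hessf θ A q) v < -((11 - 5*Real.sqrt 2)/9) * linfSq (zeta A q)) :=
  stmt4_general p r hr A hA θ Cstar hθ0 hC q hq h0 h1

end
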